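/- For all m, n with n > m and every k ≤ n − m, the ℂ-span of all k-th order partial derivatives of the padded permanent ℓ^{n−m}·perm_m has dimension at most Σ_{j=0}^{k} C(m, j)². -/

import Mathlib

/-- Iterated partial derivative with respect to a list of variables. -/
noncomputable def pderivList {σ : Type*} (L : List σ) (P : MvPolynomial σ ℂ) :
    MvPolynomial σ ℂ :=
  L.foldr (fun i q => MvPolynomial.pderiv i q) P

/-- The span of all `M · ∂^k P/∂x^β` with `M` a monomial of degree `τ` and `|β| = k`, i.e.
the degree-`(deg P - k + τ)` graded component of the `k`-th Jacobian ideal of `P`. -/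
noncomputable def shiftedPartialsSpan {σ : Type*} (P : MvPolynomial σ ℂ) (k τ : ℕ) :
    Submodule ℂ (MvPolynomial σ ℂ) :=
  Submodule.span ℂ
    { q | ∃ (L : List σ) (M : σ →₀ ℕ), L.length = k ∧ (M.sum fun _ e => e) = τ ∧
        q = MvPolynomial.monomial M (1 : ℂ) * pderivList L P }

/-- The padded permanent `ℓ^{n−m}·perm_m` in the `m²+1` variables `{y^i_j} ∪ {ℓ}`
(indexed by `(Fin m × Fin m) ⊕ Unit`, with `ℓ` the extra variable). -/
noncomputable def paddedPermSmall (m n : ℕ) :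
    MvPolynomial ((Fin m × Fin m) ⊕ Unit) ℂ :=
  MvPolynomial.X (Sum.inr ()) ^ (n - m) *
    ∑ σ : Equiv.Perm (Fin m), ∏ i : Fin m, MvPolynomial.X (Sum.inl (i, σ i))

/-!
Differentiating `ℓ^d · perm_m` by `ℓ` lowers the power of `ℓ`, and differentiating by `y^a_b`
deletes row `a` and column `b` of the matrix. Hence, for `k ≤ d`, every `k`-th partial derivative
is a linear combination of the polynomials `ℓ^(d-k+j) · perm(Y[Aᶜ, Bᶜ])` with `|A| = |B| = j ≤ k`,
and there are `Σ_{j ≤ k} C(m, j)²` such pairs `(A, B)`.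
-/

namespace MvPolynomial

variable {R σ ι : Type*} [CommSemiring R]

theorem pderiv_prod_X_of_forall_ne {s : Finset ι} {f : ι → σ} {x : σ}
    (h : ∀ i ∈ s, f i ≠ x) : pderiv x (∏ i ∈ s, X (f i) : MvPolynomial σ R) = 0 :=
  Finset.prod_induction _ (fun q => pderiv x q = 0)
    (fun p q hp hq => by simp [Derivation.leibniz, hp, hq]) pderiv_one
    (fun i hi => pderiv_X_of_ne (h i hi))

theorem pderiv_prod_X_of_mem [DecidableEq ι] {s : Finset ι} {f : ι → σ} (hf : Set.InjOn f s)
    {a : ι} (ha : a ∈ s) :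
    pderiv (f a) (∏ i ∈ s, X (f i) : MvPolynomial σ R) = ∏ i ∈ s.erase a, X (f i) := by
  have hne : ∀ i ∈ s.erase a, f i ≠ f a := fun i hi =>
    hf.ne (Finset.mem_of_mem_erase hi) ha (Finset.ne_of_mem_erase hi)
  rw [← Finset.mul_prod_erase s _ ha, Derivation.leibniz, pderiv_prod_X_of_forall_ne hne,
    pderiv_X_self, smul_zero, zero_add, smul_eq_mul, mul_one]

theorem pderiv_X_pow_mul_of_ne {i j : σ} (h : j ≠ i) (e : ℕ) (q : MvPolynomial σ R) :
    pderiv i (X j ^ e * q) = X j ^ e * pderiv i q := by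
  simp [Derivation.leibniz, Derivation.leibniz_pow, pderiv_X_of_ne h]

end MvPolynomial

theorem shiftedPartialsSpan_zero_le {σ : Type*} {P : MvPolynomial σ ℂ} {k : ℕ}
    {V : Submodule ℂ (MvPolynomial σ ℂ)} (h : ∀ L : List σ, L.length = k → pderivList L P ∈ V) :
    shiftedPartialsSpan P k 0 ≤ V :=
  Submodule.span_le.2 fun q ⟨L, M, hL, hM, hq⟩ => by
    obtain rfl : M = 0 := (Finsupp.degree_eq_zero_iff M).1 hM
    rw [hq, MvPolynomial.monomial_zero', map_one, one_mul]
    exact h L hL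

namespace Equiv.Perm

open _root_.Finset

variable {α : Type*} [DecidableEq α]

theorem apply_notMem_of_image_eq {A B : Finset α} {σ : Perm α} (hσ : A.image σ = B) {i : α}
    (hi : i ∉ A) : σ i ∉ B :=
  hσ ▸ σ.injective.mem_finset_image.not.2 hi

theorem image_swap_eq_self {B : Finset α} {b b' : α} (hb : b ∈ B) (hb' : b' ∈ B) :
    B.image (swap b' b) = B :=
  eq_of_subset_of_card_le (fun x hx => by
    obtain ⟨y, hy, rfl⟩ := mem_image.1 hx
    rcases eq_or_ne y b' with rfl | h1
    · rwa [swap_apply_left]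
    rcases eq_or_ne y b with rfl | h2
    · rwa [swap_apply_right]
    · rwa [swap_apply_of_ne_of_ne h1 h2])
    (card_image_of_injective _ (swap b' b).injective).ge

theorem image_swap_mul_eq {A B : Finset α} {σ : Perm α} (hσ : A.image σ = B) {b b' : α}
    (hb : b ∈ B) (hb' : b' ∈ B) : A.image ⇑(swap b' b * σ) = B := by
  rw [coe_mul, ← image_image, hσ, image_swap_eq_self hb hb']

theorem image_insert_eq_insert_iff {A B : Finset α} {a b : α} (ha : a ∉ A) (hb : b ∉ B)
    {σ : Perm α} : (insert a A).image σ = insert b B ∧ σ a = b ↔ A.image σ = B ∧ σ a = b := by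
  refine ⟨fun ⟨h, hσa⟩ => ⟨?_, hσa⟩, fun ⟨h, hσa⟩ => ⟨by rw [image_insert, h, hσa], hσa⟩⟩
  have hbA : b ∉ A.image σ := hσa ▸ apply_notMem_of_image_eq rfl ha
  rw [image_insert, hσa] at h
  simpa [erase_insert hbA, erase_insert hb] using congrArg (·.erase b) h

end Equiv.Perm

namespace PaddedPermanent

open MvPolynomial Finset Equiv Perm

section minorPerm

variable (R : Type*) [CommSemiring R] {m : ℕ}

noncomputable def rowProd (A : Finset (Fin m)) (σ : Perm (Fin m)) :
    MvPolynomial ((Fin m × Fin m) ⊕ Unit) R :=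
  ∏ i ∈ Aᶜ, X (Sum.inl (i, σ i))

/-- `|A|!` times the permanent of the minor of `(y^i_j)` on rows `Aᶜ` and columns `Bᶜ`. -/
noncomputable def minorPerm (A B : Finset (Fin m)) : MvPolynomial ((Fin m × Fin m) ⊕ Unit) R :=
  ∑ σ ∈ univ.filter (fun σ : Perm (Fin m) => A.image σ = B), rowProd R A σ

variable {R}

theorem pderiv_inl_rowProd (A : Finset (Fin m)) (σ : Perm (Fin m)) (a b : Fin m) :
    pderiv (Sum.inl (a, b)) (rowProd R A σ) =
      if a ∉ A ∧ σ a = b then rowProd R (insert a A) σ else 0 := by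
  unfold rowProd
  split_ifs with h
  · obtain ⟨ha, rfl⟩ := h
    rw [compl_insert]
    exact pderiv_prod_X_of_mem (fun i _ j _ hij => by simpa using hij) (mem_compl.2 ha)
  · refine pderiv_prod_X_of_forall_ne fun i hi hia => h ?_
    obtain ⟨rfl, rfl⟩ := Prod.ext_iff.1 (Sum.inl_injective hia)
    exact ⟨mem_compl.1 hi, rfl⟩

theorem pderiv_inr_minorPerm (A B : Finset (Fin m)) :
    pderiv (Sum.inr ()) (minorPerm R A B) = 0 :=
  (map_sum _ _ _).trans <| sum_eq_zero fun _ _ =>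
    pderiv_prod_X_of_forall_ne fun _ _ => Sum.inl_ne_inr

theorem pderiv_inl_minorPerm (A B : Finset (Fin m)) (a b : Fin m) :
    pderiv (Sum.inl (a, b)) (minorPerm R A B) =
      ∑ σ ∈ univ.filter (fun σ : Perm (Fin m) => A.image σ = B ∧ a ∉ A ∧ σ a = b),
        rowProd R (insert a A) σ := by
  simp only [minorPerm, map_sum, pderiv_inl_rowProd, ← sum_filter, filter_filter]

theorem rowProd_swap_mul {A B : Finset (Fin m)} {σ : Perm (Fin m)} (hσ : A.image σ = B)
    {b b' : Fin m} (hb : b ∈ B) (hb' : b' ∈ B) :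
    rowProd R A (swap b' b * σ) = rowProd R A σ :=
  prod_congr rfl fun i hi => by
    have hσi := apply_notMem_of_image_eq hσ (mem_compl.1 hi)
    rw [mul_apply, swap_apply_of_ne_of_ne (ne_of_mem_of_not_mem hb' hσi).symm
      (ne_of_mem_of_not_mem hb hσi).symm]

/-- Left multiplication by `swap b' b` maps the fibre `σ a = b'` onto the fibre `σ a = b`. -/
theorem sum_rowProd_fiber_eq {A B : Finset (Fin m)} {a b b' : Fin m} (hb : b ∈ B)
    (hb' : b' ∈ B) :
    ∑ σ ∈ univ.filter (fun σ : Perm (Fin m) => A.image σ = B ∧ σ a = b'), rowProd R A σ =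
      ∑ σ ∈ univ.filter (fun σ : Perm (Fin m) => A.image σ = B ∧ σ a = b), rowProd R A σ := by
  refine sum_nbij' (swap b' b * ·) (swap b' b * ·) ?_ ?_ (fun σ _ => swap_mul_self_mul _ _ σ)
    (fun σ _ => swap_mul_self_mul _ _ σ)
    fun σ hσ => (rowProd_swap_mul (mem_filter.1 hσ).2.1 hb hb').symm
  · intro σ hσ
    simp only [mem_filter, mem_univ, true_and] at hσ ⊢
    exact ⟨image_swap_mul_eq hσ.1 hb hb', by rw [mul_apply, hσ.2, swap_apply_left]⟩
  · intro σ hσ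
    simp only [mem_filter, mem_univ, true_and] at hσ ⊢
    exact ⟨image_swap_mul_eq hσ.1 hb hb', by rw [mul_apply, hσ.2, swap_apply_right]⟩

theorem minorPerm_eq_card_smul_sum_fiber {A B : Finset (Fin m)} {a b : Fin m} (ha : a ∈ A)
    (hb : b ∈ B) :
    minorPerm R A B = B.card •
      ∑ σ ∈ univ.filter (fun σ : Perm (Fin m) => A.image σ = B ∧ σ a = b), rowProd R A σ := by
  have hmaps : ∀ σ ∈ univ.filter (fun σ : Perm (Fin m) => A.image σ = B), σ a ∈ B :=
    fun σ hσ => (mem_filter.1 hσ).2 ▸ mem_image_of_mem σ ha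
  calc minorPerm R A B
      = ∑ b' ∈ B, ∑ σ ∈ univ.filter (fun σ : Perm (Fin m) => A.image σ = B ∧ σ a = b'),
          rowProd R A σ := by
        simp only [minorPerm, ← sum_fiberwise_of_maps_to hmaps, filter_filter]
    _ = B.card • ∑ σ ∈ univ.filter (fun σ : Perm (Fin m) => A.image σ = B ∧ σ a = b),
          rowProd R A σ := by
        rw [sum_congr rfl fun b' hb' => sum_rowProd_fiber_eq hb hb', sum_const]

theorem card_succ_smul_pderiv_inl_minorPerm (A B : Finset (Fin m)) (a b : Fin m) :
    (B.card + 1) • pderiv (Sum.inl (a, b)) (minorPerm R A B) =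
      if a ∉ A ∧ b ∉ B then minorPerm R (insert a A) (insert b B) else 0 := by
  rw [pderiv_inl_minorPerm]
  split_ifs with h
  · obtain ⟨ha, hb⟩ := h
    rw [minorPerm_eq_card_smul_sum_fiber (mem_insert_self a A) (mem_insert_self b B),
      card_insert_of_notMem hb]
    refine congrArg _ (sum_congr (filter_congr fun σ _ => ?_) fun _ _ => rfl)
    rw [image_insert_eq_insert_iff ha hb, and_iff_right ha]
  · refine (congrArg _ (sum_eq_zero fun σ hσ => ?_)).trans (smul_zero _)
    obtain ⟨hσ, ha, hσa⟩ := (mem_filter.1 hσ).2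
    exact absurd ⟨ha, hσa ▸ apply_notMem_of_image_eq hσ ha⟩ h

end minorPerm

def equicardPairs (m k : ℕ) : Finset (Finset (Fin m) × Finset (Fin m)) :=
  (range (k + 1)).biUnion fun j => powersetCard j univ ×ˢ powersetCard j univ

variable {m : ℕ}

theorem mem_equicardPairs {k : ℕ} {p : Finset (Fin m) × Finset (Fin m)} :
    p ∈ equicardPairs m k ↔ p.1.card = p.2.card ∧ p.1.card ≤ k := by
  simp only [equicardPairs, mem_biUnion, mem_range, mem_product, mem_powersetCard,
    subset_univ, true_and]
  exact ⟨fun ⟨j, hj, h1, h2⟩ => ⟨h1.trans h2.symm, by omega⟩,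
    fun ⟨h, hk⟩ => ⟨_, by omega, rfl, h.symm⟩⟩

theorem card_equicardPairs_le (m k : ℕ) :
    (equicardPairs m k).card ≤ ∑ j ∈ range (k + 1), m.choose j ^ 2 :=
  card_biUnion_le.trans <| sum_le_sum fun j _ => by
    rw [card_product, card_powersetCard, card_univ, Fintype.card_fin, sq]

noncomputable def paddedMinorPerm (d k : ℕ) (A B : Finset (Fin m)) :
    MvPolynomial ((Fin m × Fin m) ⊕ Unit) ℂ :=
  X (Sum.inr ()) ^ (d - k + A.card) * minorPerm ℂ A B

noncomputable def minorPermSpan (m d k : ℕ) :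
    Submodule ℂ (MvPolynomial ((Fin m × Fin m) ⊕ Unit) ℂ) :=
  Submodule.span ℂ ((equicardPairs m k).image fun p => paddedMinorPerm d k p.1 p.2)

instance (d k : ℕ) : FiniteDimensional ℂ (minorPermSpan m d k) :=
  FiniteDimensional.span_finset ℂ _

theorem finrank_minorPermSpan_le (d k : ℕ) :
    Module.finrank ℂ (minorPermSpan m d k) ≤ ∑ j ∈ range (k + 1), m.choose j ^ 2 :=
  (finrank_span_finset_le_card _).trans (card_image_le.trans (card_equicardPairs_le m k))

theorem paddedMinorPerm_mem_minorPermSpan {d k : ℕ} {A B : Finset (Fin m)}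
    (hAB : A.card = B.card) (hAk : A.card ≤ k) : paddedMinorPerm d k A B ∈ minorPermSpan m d k :=
  Submodule.subset_span (mem_image.2 ⟨(A, B), mem_equicardPairs.2 ⟨hAB, hAk⟩, rfl⟩)

theorem pderiv_paddedMinorPerm_mem {d k : ℕ} (hk : k + 1 ≤ d)
    {A B : Finset (Fin m)} (hAB : A.card = B.card) (hAk : A.card ≤ k)
    (x : (Fin m × Fin m) ⊕ Unit) :
    pderiv x (paddedMinorPerm d k A B) ∈ minorPermSpan m d (k + 1) := by
  rcases x with ⟨a, b⟩ | ⟨⟩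
  · suffices (B.card + 1) • pderiv (Sum.inl (a, b)) (paddedMinorPerm d k A B) ∈
        minorPermSpan m d (k + 1) by
      rwa [← Nat.cast_smul_eq_nsmul ℂ,
        Submodule.smul_mem_iff _ (Nat.cast_ne_zero.2 (Nat.succ_ne_zero _))] at this
    rw [paddedMinorPerm, pderiv_X_pow_mul_of_ne Sum.inr_ne_inl, ← mul_smul_comm,
      card_succ_smul_pderiv_inl_minorPerm]
    split_ifs with h
    · have hexp : d - k + A.card = d - (k + 1) + (insert a A).card := by
        rw [card_insert_of_notMem h.1]; omega
      rw [hexp]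
      refine paddedMinorPerm_mem_minorPermSpan ?_ ?_
      · rw [card_insert_of_notMem h.1, card_insert_of_notMem h.2, hAB]
      · rw [card_insert_of_notMem h.1]; omega
    · rw [mul_zero]
      exact Submodule.zero_mem _
  · have hderiv : pderiv (Sum.inr ()) (paddedMinorPerm d k A B) =
        (d - k + A.card) • paddedMinorPerm d (k + 1) A B := by
      have hexp : d - k + A.card - 1 = d - (k + 1) + A.card := by omega
      simp only [paddedMinorPerm, Derivation.leibniz, pderiv_inr_minorPerm,
        Derivation.leibniz_pow, pderiv_X_self, hexp, smul_eq_mul, mul_one]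
      ring
    rw [hderiv]
    exact nsmul_mem (paddedMinorPerm_mem_minorPermSpan hAB (by omega)) _


theorem pderiv_mem_minorPermSpan {d k : ℕ} (hk : k + 1 ≤ d) (x : (Fin m × Fin m) ⊕ Unit)
    {q : MvPolynomial ((Fin m × Fin m) ⊕ Unit) ℂ} (hq : q ∈ minorPermSpan m d k) :
    pderiv x q ∈ minorPermSpan m d (k + 1) := by
  refine (Submodule.span_le (p := (minorPermSpan m d (k + 1)).comap (pderiv x).toLinearMap)).2
    ?_ hq
  rintro _ hgen
  obtain ⟨⟨A, B⟩, hp, rfl⟩ := mem_image.1 hgen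
  obtain ⟨hAB, hAk⟩ := mem_equicardPairs.1 hp
  exact pderiv_paddedMinorPerm_mem hk hAB hAk x

theorem paddedPermSmall_eq (m n : ℕ) : paddedPermSmall m n = paddedMinorPerm (n - m) 0 ∅ ∅ := by
  simp [paddedPermSmall, paddedMinorPerm, minorPerm, rowProd]

theorem pderivList_paddedPermSmall_mem {n : ℕ} (L : List ((Fin m × Fin m) ⊕ Unit))
    (hL : L.length ≤ n - m) :
    pderivList L (paddedPermSmall m n) ∈ minorPermSpan m (n - m) L.length := by
  induction L with
  | nil => exact paddedPermSmall_eq m n ▸ paddedMinorPerm_mem_minorPermSpan rfl le_rfl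
  | cons x L ih => exact pderiv_mem_minorPermSpan hL x (ih (Nat.le_of_succ_le hL))

end PaddedPermanent

theorem padded_permanent_partials_upper_bound_general (m n : ℕ) :
    ∀ k : ℕ, k ≤ n - m →
      Module.finrank ℂ (shiftedPartialsSpan (paddedPermSmall m n) k 0) ≤
        ∑ j ∈ Finset.range (k + 1), Nat.choose m j ^ 2 := by
  intro k hk
  have hpartials : shiftedPartialsSpan (paddedPermSmall m n) k 0 ≤
      PaddedPermanent.minorPermSpan m (n - m) k :=
    shiftedPartialsSpan_zero_le fun L hL =>
      hL ▸ PaddedPermanent.pderivList_paddedPermSmall_mem L (hL ▸ hk)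
  exact (Submodule.finrank_mono hpartials).trans (PaddedPermanent.finrank_minorPermSpan_le _ _)

/-- For `n > m` and `k ≤ n−m`, the ℂ-span of all `k`-th order partial derivatives of the
padded permanent `ℓ^{n−m}·perm_m` has dimension at most `Σ_{j=0}^{k} C(m, j)²`. -/
theorem padded_permanent_partials_upper_bound (m n : ℕ) (hmn : m < n) :
    ∀ k : ℕ, k ≤ n - m →
      Module.finrank ℂ (shiftedPartialsSpan (paddedPermSmall m n) k 0) ≤
        ∑ j ∈ Finset.range (k + 1), Nat.choose m j ^ 2 :=
  padded_permanent_partials_upper_bound_general m n
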